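/- arXiv:2001.06465 — 2 statements merged into one kernel-verified Lean document; each statement's English description precedes it below -/
import Mathlib

section
/- Let K be a Markov kernel on a measurable space Θ that is reversible with respect to a probability measure π. Let M be uniform on {1,...,L}, let θ_M ~ π, and conditionally on M = m construct θ_{m-1},...,θ_1 by successive backward draws θ_{i} ~ K(θ_{i+1},·) and θ_{m+1},...,θ_L by forward draws θ_{j} ~ K(θ_{j-1},·). Then the joint distribution of (θ_1,...,θ_L) does not depend on M; i.e., (θ_1,...,θ_L) is independent of M. -/
open MeasureTheory ProbabilityTheory

/-- The law of `n` successive draws of a Markov kernel `K` started from the point `θ`: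
component `0` is the first draw, component `i+1` is drawn from `K` at component `i`. -/
noncomputable def chainFrom {Θ : Type*} [MeasurableSpace Θ]
    (K : Kernel Θ Θ) : (n : ℕ) → Θ → Measure (Fin n → Θ)
  | 0, _ => Measure.dirac (fun i => i.elim0)
  | n + 1, θ => (K θ).bind (fun θ1 => (chainFrom K n θ1).map (Fin.cons θ1))

/-- Assemble the trajectory `(θ_0, ..., θ_{L-1})` from the middle point `θ` at
position `m`, the backward draws `b` (with `b 0` at position `m-1`, `b 1` at
position `m-2`, ...) and the forward draws `f` (with `f 0` at position `m+1`, ...). -/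
def assembleTraj {Θ : Type*} (L : ℕ) (m : Fin L) (θ : Θ)
    (b : Fin (m : ℕ) → Θ) (f : Fin (L - 1 - (m : ℕ)) → Θ) : Fin L → Θ :=
  fun i =>
    if h : (i : ℕ) < (m : ℕ) then b ⟨(m : ℕ) - 1 - (i : ℕ), by omega⟩
    else if h' : (i : ℕ) = (m : ℕ) then θ
    else f ⟨(i : ℕ) - (m : ℕ) - 1, by omega⟩

/-- The joint law of the trajectory `(θ_0, ..., θ_{L-1})` constructed by placing an
exact `π`-sample at position `m`, running the chain backwards `m` steps and
forwards `L - 1 - m` steps with the kernel `K`. -/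
noncomputable def backForthLaw {Θ : Type*} [MeasurableSpace Θ]
    (K : Kernel Θ Θ) (π : Measure Θ) (L : ℕ) (m : Fin L) : Measure (Fin L → Θ) :=
  π.bind (fun θ =>
    ((chainFrom K (m : ℕ) θ).prod (chainFrom K (L - 1 - (m : ℕ)) θ)).map
      (fun p => assembleTraj L m θ p.1 p.2))

/-! Write `θ'` and `θ` for the points at positions `k` and `k + 1`. If the exact `π`-sample sits
at `k + 1`, the pair `(θ, θ')` has law `π ⊗ₘ K`; if it sits at `k`, the pair has the swapped law.
In both cases, given the pair, the rest of the trajectory is a backward chain from `θ'` and an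
independent forward chain from `θ`. Reversibility makes the two pair laws equal, so moving the
exact sample by one position does not change the law of the trajectory. -/

namespace MeasureTheory.Measure

variable {α β γ : Type*} [MeasurableSpace α] [MeasurableSpace β] [MeasurableSpace γ]

theorem bind_map (μ : Measure α) {f : α → β} (hf : Measurable f) {g : β → Measure γ}
    (hg : Measurable g) :
    (μ.map f).bind g = μ.bind (g ∘ f) := by
  ext s hs
  have hgs : Measurable fun b => g b s := (measurable_coe hs).comp hg
  rw [bind_apply hs hg.aemeasurable, lintegral_map hgs hf, bind_apply hs (hg.comp hf).aemeasurable]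
  rfl

theorem comp_prod_const (μ : Measure α) (κ : Kernel α β) [IsSFiniteKernel κ]
    (ν : Measure γ) [SFinite ν] :
    (κ ∘ₘ μ).prod ν = (κ ×ₖ Kernel.const α ν) ∘ₘ μ := by
  ext s hs
  rw [prod_apply hs, lintegral_bind κ.aemeasurable (measurable_measure_prodMk_left hs).aemeasurable,
    bind_apply hs (Kernel.aemeasurable _)]
  simp only [Kernel.prod_apply, Kernel.const_apply, prod_apply hs]

theorem const_prod_comp (μ : Measure α) [SFinite μ] (κ : Kernel α β) [IsSFiniteKernel κ]
    (ν : Measure γ) [SFinite ν] :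
    ν.prod (κ ∘ₘ μ) = (Kernel.const α ν ×ₖ κ) ∘ₘ μ := by
  rw [← prod_swap, comp_prod_const, map_comp _ _ measurable_swap, Kernel.map_prod_swap]

end MeasureTheory.Measure

namespace ProbabilityTheory.Kernel

variable {α β γ : Type*} [MeasurableSpace α] [MeasurableSpace β] [MeasurableSpace γ]

theorem map_id_prod_apply (κ : Kernel α β) [IsSFiniteKernel κ] {f : α × β → γ}
    (hf : Measurable f) (a : α) :
    (Kernel.id ×ₖ κ).map f a = (κ a).map (fun b => f (a, b)) := by
  rw [map_apply _ hf, prod_apply, id_apply, Measure.dirac_prod,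
    Measure.map_map hf measurable_prodMk_left]
  rfl

theorem comp_id_prod_apply (η : Kernel (α × β) γ) (κ : Kernel α β) [IsSFiniteKernel κ] (a : α) :
    (η ∘ₖ (Kernel.id ×ₖ κ)) a = (κ a).bind (fun b => η (a, b)) := by
  rw [comp_apply, prod_apply, id_apply, Measure.dirac_prod,
    Measure.bind_map _ measurable_prodMk_left η.measurable]
  rfl

theorem comp_prod_id_apply (η : Kernel (β × α) γ) (κ : Kernel α β) [IsSFiniteKernel κ] (a : α) :
    (η ∘ₖ (κ ×ₖ Kernel.id)) a = (κ a).bind (fun b => η (b, a)) := by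
  rw [comp_apply, prod_apply, id_apply, Measure.prod_dirac,
    Measure.bind_map _ measurable_prodMk_right η.measurable]
  rfl

end ProbabilityTheory.Kernel

theorem Fin.cons_mk {α : Type*} {n : ℕ} (x : α) (b : Fin n → α) (j : ℕ) (hj : j < n + 1) :
    (Fin.cons x b : Fin (n + 1) → α) ⟨j, hj⟩ = if h : j = 0 then x else b ⟨j - 1, by omega⟩ := by
  cases j <;> rfl

theorem Fin.apply_eq_apply_of_succ_eq {α : Sort*} {L : ℕ} (f : Fin L → α)
    (h : ∀ (k : ℕ) (hk : k + 1 < L), f ⟨k + 1, hk⟩ = f ⟨k, by omega⟩) (m m' : Fin L) :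
    f m = f m' := by
  have h0 : ∀ (k : ℕ) (hk : k < L), f ⟨k, hk⟩ = f ⟨0, by omega⟩ := by
    intro k
    induction k with
    | zero => intro _; rfl
    | succ k ih => intro hk; rw [h k hk, ih]
  exact (h0 m m.isLt).trans (h0 m' m'.isLt).symm

theorem assembleTraj_succ_eq {Θ : Type*} (L k : ℕ) (hk : k + 1 < L)
    (hn : L - 1 - (k + 1) + 1 = L - 1 - k) (θ θ' : Θ) (b : Fin k → Θ)
    (f : Fin (L - 1 - (k + 1)) → Θ) :
    assembleTraj L ⟨k, by omega⟩ θ' b (Fin.cons θ f ∘ Fin.cast hn.symm)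
      = assembleTraj L ⟨k + 1, hk⟩ θ (Fin.cons θ' b) f := by
  funext i
  simp only [assembleTraj, Function.comp_apply, Fin.cast_mk, Fin.cons_mk]
  split_ifs <;> first | rfl | omega | (congr 1; ext; simp only; omega)

section Measurability

variable {α Θ : Type*} [MeasurableSpace α] [MeasurableSpace Θ]

@[fun_prop]
theorem Measurable.finCons {n : ℕ} {f : α → Θ} {g : α → Fin n → Θ} (hf : Measurable f)
    (hg : Measurable g) : Measurable fun a => (Fin.cons (f a) (g a) : Fin (n + 1) → Θ) := by
  refine measurable_pi_lambda _ fun i => ?_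
  cases i using Fin.cases with
  | zero => exact hf
  | succ i => exact (measurable_pi_apply i).comp hg

@[fun_prop]
theorem Measurable.assembleTraj {L : ℕ} {m : Fin L} {f : α → Θ} {g : α → Fin m → Θ}
    {h : α → Fin (L - 1 - m) → Θ} (hf : Measurable f) (hg : Measurable g) (hh : Measurable h) :
    Measurable fun a => assembleTraj L m (f a) (g a) (h a) := by
  refine measurable_pi_lambda _ fun i => ?_
  unfold _root_.assembleTraj
  split_ifs <;> fun_prop

end Measurability

section Chains

open Kernel

variable {Θ : Type*} [MeasurableSpace Θ] (K : Kernel Θ Θ)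

noncomputable def chainKernel : (n : ℕ) → Kernel Θ (Fin n → Θ)
  | 0 => deterministic (fun _ => Fin.elim0) measurable_const
  | n + 1 => (Kernel.id ×ₖ chainKernel n).map (fun p => Fin.cons p.1 p.2) ∘ₖ K

noncomputable def pathKernel (n : ℕ) : Kernel Θ (Fin (n + 1) → Θ) :=
  (Kernel.id ×ₖ chainKernel K n).map (fun p => Fin.cons p.1 p.2)

theorem chainKernel_succ (n : ℕ) : chainKernel K (n + 1) = pathKernel K n ∘ₖ K := rfl

theorem chainKernel_cast {n n' : ℕ} (h : n = n') (θ : Θ) :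
    chainKernel K n' θ = (chainKernel K n θ).map (· ∘ Fin.cast h.symm) := by
  subst h
  exact Measure.map_id.symm

noncomputable def backForthKernel (L : ℕ) (m : Fin L) : Kernel Θ (Fin L → Θ) :=
  (Kernel.id ×ₖ (chainKernel K m ×ₖ chainKernel K (L - 1 - m))).map
    (fun q => assembleTraj L m q.1 q.2.1 q.2.2)

/-- The arguments `(θ, θ')` are the points at positions `k + 1` and `k`. -/
noncomputable def bridgeKernel (L k : ℕ) (hk : k + 1 < L) : Kernel (Θ × Θ) (Fin L → Θ) :=
  (Kernel.id ×ₖ ((pathKernel K k).comap Prod.snd measurable_snd ×ₖ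
      (chainKernel K (L - 1 - (k + 1))).comap Prod.fst measurable_fst)).map
    (fun q => assembleTraj L ⟨k + 1, hk⟩ q.1.1 q.2.1 q.2.2)

variable [IsSFiniteKernel K]

instance isSFiniteKernel_chainKernel : ∀ n, IsSFiniteKernel (chainKernel K n)
  | 0 => by rw [chainKernel]; infer_instance
  | n + 1 => by
    have := isSFiniteKernel_chainKernel n
    rw [chainKernel]; infer_instance

instance isSFiniteKernel_pathKernel (n : ℕ) : IsSFiniteKernel (pathKernel K n) := by
  rw [pathKernel]; infer_instance

theorem pathKernel_apply (n : ℕ) (θ : Θ) :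
    pathKernel K n θ = (chainKernel K n θ).map (Fin.cons θ) :=
  map_id_prod_apply _ (by fun_prop) θ

theorem chainKernel_apply (n : ℕ) (θ : Θ) : chainKernel K n θ = chainFrom K n θ := by
  induction n generalizing θ with
  | zero => rfl
  | succ n ih =>
    rw [chainKernel_succ, comp_apply, chainFrom]
    congr 1
    funext θ'
    rw [pathKernel_apply, ih]

theorem backForthKernel_apply (L : ℕ) (m : Fin L) (θ : Θ) :
    backForthKernel K L m θ = ((chainKernel K m θ).prod (chainKernel K (L - 1 - m) θ)).map
      (fun r => assembleTraj L m θ r.1 r.2) := by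
  rw [backForthKernel, map_id_prod_apply _ (by fun_prop), prod_apply]

theorem backForthLaw_eq_comp (π : Measure Θ) (L : ℕ) (m : Fin L) :
    backForthLaw K π L m = backForthKernel K L m ∘ₘ π := by
  refine congrArg π.bind (funext fun θ => ?_)
  rw [backForthKernel_apply, chainKernel_apply, chainKernel_apply]

theorem bridgeKernel_apply (L k : ℕ) (hk : k + 1 < L) (θ θ' : Θ) :
    bridgeKernel K L k hk (θ, θ') =
      ((pathKernel K k θ').prod (chainKernel K (L - 1 - (k + 1)) θ)).map
        (fun r => assembleTraj L ⟨k + 1, hk⟩ θ r.1 r.2) := by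
  rw [bridgeKernel, map_id_prod_apply _ (by fun_prop), prod_apply, comap_apply, comap_apply]

theorem bridgeKernel_apply' (L k : ℕ) (hk : k + 1 < L) (hn : L - 1 - (k + 1) + 1 = L - 1 - k)
    (θ θ' : Θ) :
    bridgeKernel K L k hk (θ, θ') =
      ((chainKernel K k θ').prod ((pathKernel K (L - 1 - (k + 1)) θ).map
        (· ∘ Fin.cast hn.symm))).map (fun r => assembleTraj L ⟨k, by omega⟩ θ' r.1 r.2) := by
  have hleft := Measure.map_prod_map (chainKernel K k θ') (chainKernel K (L - 1 - (k + 1)) θ)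
    (f := Fin.cons θ') (measurable_const.finCons measurable_id) measurable_id
  have hright := Measure.map_prod_map (chainKernel K k θ') (chainKernel K (L - 1 - (k + 1)) θ)
    (g := (· ∘ Fin.cast hn.symm) ∘ Fin.cons θ) measurable_id (by fun_prop)
  rw [Measure.map_id] at hleft hright
  rw [bridgeKernel_apply, pathKernel_apply, pathKernel_apply,
    Measure.map_map (by fun_prop) (by fun_prop), hleft, hright,
    Measure.map_map (by fun_prop) (by fun_prop), Measure.map_map (by fun_prop) (by fun_prop)]
  congr 1
  funext r
  exact (assembleTraj_succ_eq L k hk hn θ θ' r.1 r.2).symm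

theorem bridgeKernel_comp_id_prod (L k : ℕ) (hk : k + 1 < L) :
    bridgeKernel K L k hk ∘ₖ (Kernel.id ×ₖ K) = backForthKernel K L ⟨k + 1, hk⟩ := by
  ext1 θ
  rw [comp_id_prod_apply, backForthKernel_apply, chainKernel_succ, comp_apply,
    Measure.comp_prod_const, Measure.map_comp _ _ (by fun_prop)]
  congr 1
  funext θ'
  rw [bridgeKernel_apply, map_apply _ (by fun_prop), prod_apply, const_apply]

theorem bridgeKernel_comp_prod_id (L k : ℕ) (hk : k + 1 < L) :
    bridgeKernel K L k hk ∘ₖ (K ×ₖ Kernel.id) = backForthKernel K L ⟨k, by omega⟩ := by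
  have hn : L - 1 - (k + 1) + 1 = L - 1 - k := by omega
  ext1 θ'
  rw [comp_prod_id_apply, backForthKernel_apply, chainKernel_cast K hn, chainKernel_succ,
    comp_apply, Measure.map_comp _ _ (by fun_prop), Measure.const_prod_comp,
    Measure.map_comp _ _ (by fun_prop)]
  congr 1
  funext θ
  rw [bridgeKernel_apply' K L k hk hn, map_apply _ (by fun_prop), prod_apply, const_apply,
    map_apply _ (by fun_prop)]

end Chains

theorem backForthLaw_succ_eq {Θ : Type*} [MeasurableSpace Θ] (K : Kernel Θ Θ)
    [IsSFiniteKernel K] (π : Measure Θ) [SFinite π] (hrev : π ⊗ₘ K = (π ⊗ₘ K).map Prod.swap)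
    (L k : ℕ) (hk : k + 1 < L) :
    backForthLaw K π L ⟨k + 1, hk⟩ = backForthLaw K π L ⟨k, by omega⟩ :=
  calc backForthLaw K π L ⟨k + 1, hk⟩
      = bridgeKernel K L k hk ∘ₘ (π ⊗ₘ K) := by
        rw [backForthLaw_eq_comp, ← bridgeKernel_comp_id_prod, ← Measure.comp_assoc,
          Measure.compProd_eq_comp_prod]
    _ = bridgeKernel K L k hk ∘ₘ (π ⊗ₘ K).map Prod.swap := by rw [← hrev]
    _ = backForthLaw K π L ⟨k, by omega⟩ := by
        rw [Measure.compProd_eq_comp_prod, Measure.map_comp _ _ measurable_swap,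
          Kernel.map_prod_swap, Measure.comp_assoc, bridgeKernel_comp_prod_id, backForthLaw_eq_comp]

theorem backForthLaw_indep_of_index_general
    {Θ : Type*} [MeasurableSpace Θ]
    (K : Kernel Θ Θ) [IsMarkovKernel K]
    (π : Measure Θ) [IsProbabilityMeasure π]
    (hrev : π ⊗ₘ K = (π ⊗ₘ K).map Prod.swap)
    (L : ℕ) :
    ∀ m m' : Fin L, backForthLaw K π L m = backForthLaw K π L m' :=
  Fin.apply_eq_apply_of_succ_eq _ (backForthLaw_succ_eq K π hrev L)

/-- If the Markov kernel `K` is reversible with respect to the probability measure `π`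
(detailed balance: `π(dθ)K(θ,dθ') = π(dθ')K(θ',dθ)`), then the joint distribution of
the trajectory `(θ_1,...,θ_L)` built from a uniformly chosen starting index `M = m`
does not depend on `m`; i.e. the trajectory is independent of `M`. -/
theorem backForthLaw_indep_of_index
    {Θ : Type*} [MeasurableSpace Θ]
    (K : Kernel Θ Θ) [IsMarkovKernel K]
    (π : Measure Θ) [IsProbabilityMeasure π]
    (hrev : π ⊗ₘ K = (π ⊗ₘ K).map Prod.swap)
    (L : ℕ) (hL : 0 < L) :
    ∀ m m' : Fin L, backForthLaw K π L m = backForthLaw K π L m' :=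
  backForthLaw_indep_of_index_general K π hrev L
end

section
/- Consider the sequential test: set β_1 = α/k and γ = β_1^{1/k}; at step i = 1,...,k, observe a d-variate p-value vector p^{(i)}, set q_i = d · min_j p^{(i)}_j; return 'fail' if q_i ≤ β_i; stop and return 'OK' if q_i > γ + β_i; otherwise set β_{i+1} = β_i/γ and continue (returning 'OK' if step k completes without failure). Suppose p^{(1)},...,p^{(k)} are independent d-variate random vectors in [0,1]^d with P(p^{(i)}_j ≤ p) ≤ p for all p ∈ [0,1], all i, j. Then P(fail) ≤ α. -/
open MeasureTheory ProbabilityTheory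

/-- Step `i` (0-indexed) of the sequential test is reached iff at every earlier step `j`
the test continued, i.e. `β_j < q_j ≤ γ + β_j`. -/
def stepReached {Ω : Type*} (k : ℕ) (q : Fin k → Ω → ℝ) (β : ℕ → ℝ) (γ : ℝ)
    (i : Fin k) (ω : Ω) : Prop :=
  ∀ j : Fin k, j < i → β j < q j ω ∧ q j ω ≤ γ + β j

/-- The sequential test fails iff some step `i` is reached and `q_i ≤ β_i` there. -/
def seqFail {Ω : Type*} (k : ℕ) (q : Fin k → Ω → ℝ) (β : ℕ → ℝ) (γ : ℝ) : Set Ω :=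
  {ω | ∃ i : Fin k, stepReached k q β γ i ω ∧ q i ω ≤ β i}


/-!
The test fails exactly when some step `i` has `q_i ≤ β_i` after `β_j < q_j ≤ γ + β_j` at every
earlier step, so by independence `P(fail) ≤ ∑_i a_i ∏_{j<i} b_j` with `a_i = P(q_i ≤ β_i)` and
`b_i = P(β_i < q_i ≤ γ + β_i)`. Bonferroni gives `a_i ≤ β_i` and `a_i + b_i ≤ γ + β_i`, and a
backward induction using `γ β_{i+1} = β_i` bounds the tail of the sum from step `i` by
`min(1, (k - i) β_i)`; at the first step this is `k β_0 = α`.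
-/

open Finset
open scoped ENNReal

theorem sum_range_succ_mul_prod_range {R : Type*} [CommSemiring R] (a b : ℕ → R) (n : ℕ) :
    ∑ i ∈ range (n + 1), a i * ∏ j ∈ range i, b j =
      a 0 + b 0 * ∑ i ∈ range n, a (i + 1) * ∏ j ∈ range i, b (j + 1) := by
  rw [sum_range_succ', prod_range_zero, mul_one, mul_sum, add_comm]
  congr 1
  refine sum_congr rfl fun i _ => ?_
  rw [prod_range_succ']
  ring

theorem Fin.sum_mul_prod_Iio_eq_sum_range {R : Type*} [CommSemiring R] (k : ℕ) (a b : ℕ → R) :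
    ∑ i : Fin k, a i * ∏ j ∈ Iio i, b j = ∑ i ∈ range k, a i * ∏ j ∈ range i, b j := by
  have hprod (i : Fin k) : ∏ j ∈ Iio i, b j = ∏ j ∈ range i, b j := by
    rw [← Nat.Iio_eq_range, ← Fin.map_valEmbedding_Iio, prod_map]
    rfl
  simp only [hprod]
  exact Fin.sum_univ_eq_sum_range (fun i => a i * ∏ j ∈ range i, b j) k

theorem sum_mul_prod_range_le {a b β : ℕ → ℝ} {γ : ℝ} (hγ : 0 ≤ γ)
    (hrec : ∀ m, γ * β (m + 1) = β m) {n : ℕ}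
    (ha0 : ∀ m < n, 0 ≤ a m) (hb0 : ∀ m < n, 0 ≤ b m) (ha : ∀ m < n, a m ≤ β m)
    (hab1 : ∀ m < n, a m + b m ≤ 1) (habγ : ∀ m < n, a m + b m ≤ γ + β m) :
    ∑ i ∈ range n, a i * ∏ j ∈ range i, b j ≤ n * β 0 ∧
      ∑ i ∈ range n, a i * ∏ j ∈ range i, b j ≤ 1 := by
  induction n generalizing a b β with
  | zero => simp
  | succ n ih =>
    obtain ⟨hxβ, hx1⟩ := ih (a := fun m => a (m + 1)) (b := fun m => b (m + 1))
      (β := fun m => β (m + 1)) (fun m => hrec (m + 1)) (fun m hm => ha0 _ (by omega))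
      (fun m hm => hb0 _ (by omega)) (fun m hm => ha _ (by omega))
      (fun m hm => hab1 _ (by omega)) (fun m hm => habγ _ (by omega))
    set x := ∑ i ∈ range n, a (i + 1) * ∏ j ∈ range i, b (j + 1)
    have hx0 : 0 ≤ x := sum_nonneg fun i hi => mul_nonneg (ha0 _ (by simp at hi; omega))
      (prod_nonneg fun j hj => hb0 _ (by simp at hi hj; omega))
    have h0 := n.succ_pos
    rw [sum_range_succ_mul_prod_range]
    constructor
    · -- a + b x = a (1 - x) + (a + b) x ≤ β (1 - x) + (γ + β) x = β + γ x
      have hstep : a 0 + b 0 * x ≤ β 0 + γ * x := by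
        nlinarith [mul_le_mul_of_nonneg_right (ha 0 h0) (sub_nonneg.2 hx1),
          mul_le_mul_of_nonneg_right (habγ 0 h0) hx0]
      have hγx := mul_le_mul_of_nonneg_left hxβ hγ
      push_cast
      nlinarith [hrec 0]
    · nlinarith [mul_le_mul_of_nonneg_left hx1 (hb0 0 h0), hab1 0 h0]

theorem sum_mul_prod_Iio_le_ofReal {k : ℕ} {a b : Fin k → ℝ≥0∞} {β : ℕ → ℝ} {γ : ℝ}
    (hγ : 0 ≤ γ) (hβ : ∀ m, 0 ≤ β m) (hrec : ∀ m, γ * β (m + 1) = β m)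
    (ha : ∀ i : Fin k, a i ≤ ENNReal.ofReal (β i)) (hab1 : ∀ i, a i + b i ≤ 1)
    (habγ : ∀ i : Fin k, a i + b i ≤ ENNReal.ofReal (γ + β i)) :
    ∑ i, a i * ∏ j ∈ Iio i, b j ≤ ENNReal.ofReal (k * β 0) := by
  set a' : ℕ → ℝ := fun m => if h : m < k then (a ⟨m, h⟩).toReal else 0
  set b' : ℕ → ℝ := fun m => if h : m < k then (b ⟨m, h⟩).toReal else 0
  have hab_ne_top (i : Fin k) : a i + b i ≠ ⊤ := ne_top_of_le_ne_top ENNReal.one_ne_top (hab1 i)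
  have ha' (i : Fin k) : a i = ENNReal.ofReal (a' i) := by
    simp [a', ENNReal.ofReal_toReal (ENNReal.add_ne_top.1 (hab_ne_top i)).1]
  have hb' (i : Fin k) : b i = ENNReal.ofReal (b' i) := by
    simp [b', ENNReal.ofReal_toReal (ENNReal.add_ne_top.1 (hab_ne_top i)).2]
  have hab' (m : ℕ) (hm : m < k) : a' m + b' m = (a ⟨m, hm⟩ + b ⟨m, hm⟩).toReal := by
    simp [a', b', hm, ENNReal.toReal_add (ENNReal.add_ne_top.1 (hab_ne_top _)).1
      (ENNReal.add_ne_top.1 (hab_ne_top _)).2]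
  have ha'0 (m : ℕ) : 0 ≤ a' m := by simp only [a']; split_ifs <;> positivity
  have hb'0 (m : ℕ) : 0 ≤ b' m := by simp only [b']; split_ifs <;> positivity
  have hsum : ∑ i, a i * ∏ j ∈ Iio i, b j =
      ENNReal.ofReal (∑ i ∈ range k, a' i * ∏ j ∈ range i, b' j) := by
    simp only [ha', hb']
    rw [Fin.sum_mul_prod_Iio_eq_sum_range k (fun m => ENNReal.ofReal (a' m))
      (fun m => ENNReal.ofReal (b' m)), ENNReal.ofReal_sum_of_nonneg fun i _ =>
        mul_nonneg (ha'0 i) (prod_nonneg fun j _ => hb'0 j)]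
    refine sum_congr rfl fun i _ => ?_
    rw [ENNReal.ofReal_mul (ha'0 i), ENNReal.ofReal_prod_of_nonneg fun j _ => hb'0 j]
  rw [hsum]
  refine ENNReal.ofReal_le_ofReal (sum_mul_prod_range_le hγ hrec (fun m _ => ha'0 m)
    (fun m _ => hb'0 m) (fun m hm => ?_) (fun m hm => ?_) (fun m hm => ?_)).1
  · simpa [a', hm] using ENNReal.toReal_le_of_le_ofReal (hβ m) (ha ⟨m, hm⟩)
  · rw [hab' m hm]
    exact ENNReal.toReal_le_of_le_ofReal zero_le_one (ENNReal.ofReal_one ▸ hab1 _)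
  · rw [hab' m hm]
    exact ENNReal.toReal_le_of_le_ofReal (add_nonneg hγ (hβ m)) (habγ _)

theorem ProbabilityTheory.iIndep.measure_inter_biInter_Iio {ι Ω : Type*} [LinearOrder ι]
    [LocallyFiniteOrderBot ι] {mΩ : MeasurableSpace Ω} {μ : Measure Ω}
    {m : ι → MeasurableSpace Ω} (h : iIndep m μ) {F C : ι → Set Ω} (i : ι)
    (hF : MeasurableSet[m i] (F i)) (hC : ∀ j < i, MeasurableSet[m j] (C j)) :
    μ (F i ∩ ⋂ j ∈ Iio i, C j) = μ (F i) * ∏ j ∈ Iio i, μ (C j) := by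
  have hs (j : ι) (hj : j ∈ Iio i) : Function.update C i (F i) j = C j :=
    Function.update_of_ne (mem_Iio.1 hj).ne _ _
  calc μ (F i ∩ ⋂ j ∈ Iio i, C j)
      = μ (⋂ j ∈ insert i (Iio i), Function.update C i (F i) j) := by
        rw [set_biInter_insert, Function.update_self, Set.iInter₂_congr hs]
    _ = ∏ j ∈ insert i (Iio i), μ (Function.update C i (F i) j) := h.meas_biInter fun j hj => by
        rcases mem_insert.1 hj with rfl | hj
        · simpa using hF
        · simpa [hs j hj] using hC j (mem_Iio.1 hj)
    _ = μ (F i) * ∏ j ∈ Iio i, μ (C j) := by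
        rw [prod_insert (by simp), Function.update_self,
          prod_congr rfl fun j hj => congrArg μ (hs j hj)]

theorem measure_card_mul_iInf_le {ι Ω : Type*} [Fintype ι] [Nonempty ι] [MeasurableSpace Ω]
    {μ : Measure Ω} [IsZeroOrProbabilityMeasure μ] {p : ι → Ω → ℝ}
    (hp : ∀ j, ∀ t ∈ Set.Icc (0 : ℝ) 1, μ {ω | p j ω ≤ t} ≤ ENNReal.ofReal t) {t : ℝ}
    (ht : 0 ≤ t) : μ {ω | Fintype.card ι * ⨅ j, p j ω ≤ t} ≤ ENNReal.ofReal t := by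
  rcases le_or_gt t 1 with ht1 | ht1
  · set c : ℝ := (Fintype.card ι : ℝ)
    have hc : 1 ≤ c := Nat.one_le_cast.2 Fintype.card_pos
    have hsub : {ω | c * ⨅ j, p j ω ≤ t} ⊆ ⋃ j, {ω | p j ω ≤ t / c} := by
      intro ω hω
      obtain ⟨j, hj⟩ := exists_eq_ciInf_of_finite (f := fun j => p j ω)
      refine Set.mem_iUnion.2 ⟨j, show p j ω ≤ t / c from ?_⟩
      rw [hj, le_div_iff₀ (by positivity), mul_comm]
      exact hω
    calc μ {ω | c * ⨅ j, p j ω ≤ t}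
        ≤ ∑ j, μ {ω | p j ω ≤ t / c} := (measure_mono hsub).trans (measure_iUnion_fintype_le _ _)
      _ ≤ ∑ _j : ι, ENNReal.ofReal (t / c) := sum_le_sum fun j _ =>
          hp j _ ⟨by positivity, (div_le_one (by positivity)).2 (ht1.trans hc)⟩
      _ = ENNReal.ofReal t := by
          rw [sum_const, card_univ, nsmul_eq_mul, ← ENNReal.ofReal_natCast,
            ← ENNReal.ofReal_mul (by positivity), mul_div_cancel₀ _ (by positivity)]
  · exact prob_le_one.trans (ENNReal.ofReal_one ▸ ENNReal.ofReal_le_ofReal ht1.le)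

theorem measure_preimage_Iic_add_measure_preimage_Ioc {Ω α : Type*} [MeasurableSpace Ω]
    {μ : Measure Ω} [LinearOrder α] [MeasurableSpace α] [TopologicalSpace α]
    [OpensMeasurableSpace α] [OrderClosedTopology α] {f : Ω → α} (hf : Measurable f) {a b : α}
    (hab : a ≤ b) : μ (f ⁻¹' Set.Iic a) + μ (f ⁻¹' Set.Ioc a b) = μ (f ⁻¹' Set.Iic b) := by
  rw [← measure_union ((Set.Iic_disjoint_Ioc le_rfl).preimage f) (hf measurableSet_Ioc),
    ← Set.preimage_union, Set.Iic_union_Ioc_eq_Iic hab]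

theorem seq_test_size_bound_general
    {Ω : Type*} [MeasurableSpace Ω] (μ : Measure Ω) [IsProbabilityMeasure μ]
    (α : ℝ) (hα : α ∈ Set.Ioo (0 : ℝ) 1)
    (k : ℕ) (hk : 0 < k) (d : ℕ) (hd : 0 < d)
    (p : Fin k → Fin d → Ω → ℝ)
    (hmeas : ∀ i j, Measurable (p i j))
    (hsuper : ∀ i j, ∀ t ∈ Set.Icc (0 : ℝ) 1,
      μ {ω | p i j ω ≤ t} ≤ ENNReal.ofReal t)
    (hindep : iIndepFun
      (fun i ω => fun j => p i j ω) μ)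
    (γ : ℝ) (hγ : γ = (α / k) ^ ((1 : ℝ) / k))
    (β : ℕ → ℝ) (hβ : ∀ i, β i = (α / k) / γ ^ i)
    (q : Fin k → Ω → ℝ)
    (hq : ∀ i ω, q i ω = d * ⨅ j : Fin d, p i j ω) :
    μ (seqFail k q β γ) ≤ ENNReal.ofReal α := by
  have : Nonempty (Fin d) := ⟨⟨0, hd⟩⟩
  have hαk : 0 < α / k := div_pos hα.1 (Nat.cast_pos.2 hk)
  have hγ0 : 0 < γ := hγ ▸ Real.rpow_pos_of_pos hαk _
  have hβ0 (m : ℕ) : 0 < β m := by rw [hβ]; positivity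
  have hrec (m : ℕ) : γ * β (m + 1) = β m := by rw [hβ, hβ, pow_succ]; field_simp
  have hkβ : k * β 0 = α := by rw [hβ]; field_simp
  set g : (Fin d → ℝ) → ℝ := fun x => Fintype.card (Fin d) * ⨅ j, x j
  have hg : Measurable g := measurable_const.mul (Measurable.iInf measurable_pi_apply)
  have hq_eq : q = fun i => g ∘ fun ω j => p i j ω := by ext i ω; simp [g, hq]
  have hq_indep : iIndepFun q μ := hq_eq ▸ hindep.comp _ fun _ => hg
  have hq_meas (i : Fin k) : Measurable (q i) := hq_eq ▸ hg.comp (measurable_pi_iff.2 (hmeas i))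
  have hq_le (i : Fin k) (t : ℝ) (ht : 0 ≤ t) : μ (q i ⁻¹' Set.Iic t) ≤ ENNReal.ofReal t :=
    hq_eq ▸ measure_card_mul_iInf_le (hsuper i) ht
  have hfail : seqFail k q β γ =
      ⋃ i, q i ⁻¹' Set.Iic (β i) ∩ ⋂ j ∈ Iio i, q j ⁻¹' Set.Ioc (β j) (γ + β j) := by
    ext ω; simp [seqFail, stepReached, and_comm]
  calc μ (seqFail k q β γ)
      ≤ ∑ i, μ (q i ⁻¹' Set.Iic (β i) ∩ ⋂ j ∈ Iio i, q j ⁻¹' Set.Ioc (β j) (γ + β j)) :=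
        hfail ▸ measure_iUnion_fintype_le _ _
    _ = ∑ i, μ (q i ⁻¹' Set.Iic (β i)) * ∏ j ∈ Iio i, μ (q j ⁻¹' Set.Ioc (β j) (γ + β j)) :=
        sum_congr rfl fun i _ => hq_indep.iIndep.measure_inter_biInter_Iio
          (F := fun i => q i ⁻¹' Set.Iic (β i)) (C := fun j => q j ⁻¹' Set.Ioc (β j) (γ + β j))
          i ⟨_, measurableSet_Iic, rfl⟩ fun j _ => ⟨_, measurableSet_Ioc, rfl⟩
    _ ≤ ENNReal.ofReal (k * β 0) := by
        refine sum_mul_prod_Iio_le_ofReal hγ0.le (fun m => (hβ0 m).le) hrec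
          (fun i => hq_le i _ (hβ0 i).le) (fun i => ?_) (fun i => ?_) <;>
        rw [measure_preimage_Iic_add_measure_preimage_Ioc (hq_meas i) (by linarith [hβ0 i])]
        · exact prob_le_one
        · exact hq_le i _ (by linarith [hβ0 i])
    _ = ENNReal.ofReal α := by rw [hkβ]

/-- The sequential test of Algorithm 3: with `β_1 = α/k`, `γ = β_1^{1/k}`,
`β_{i+1} = β_i/γ` and `q_i = d · min_j p^{(i)}_j`, if the p-value vectors
`p^{(1)},...,p^{(k)}` are independent with super-uniform coordinates
(`P(p^{(i)}_j ≤ p) ≤ p` for all `p ∈ [0,1]`) taking values in `[0,1]^d`,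
then the probability of returning `fail` is at most `α`. -/
theorem seq_test_size_bound
    {Ω : Type*} [MeasurableSpace Ω] (μ : Measure Ω) [IsProbabilityMeasure μ]
    (α : ℝ) (hα : α ∈ Set.Ioo (0 : ℝ) 1)
    (k : ℕ) (hk : 0 < k) (d : ℕ) (hd : 0 < d)
    (p : Fin k → Fin d → Ω → ℝ)
    (hmeas : ∀ i j, Measurable (p i j))
    (hrange : ∀ i j ω, p i j ω ∈ Set.Icc (0 : ℝ) 1)
    (hsuper : ∀ i j, ∀ t ∈ Set.Icc (0 : ℝ) 1,
      μ {ω | p i j ω ≤ t} ≤ ENNReal.ofReal t)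
    (hindep : iIndepFun
      (fun i ω => fun j => p i j ω) μ)
    (γ : ℝ) (hγ : γ = (α / k) ^ ((1 : ℝ) / k))
    (β : ℕ → ℝ) (hβ : ∀ i, β i = (α / k) / γ ^ i)
    (q : Fin k → Ω → ℝ)
    (hq : ∀ i ω, q i ω = d * ⨅ j : Fin d, p i j ω) :
    μ (seqFail k q β γ) ≤ ENNReal.ofReal α :=
  seq_test_size_bound_general μ α hα k hk d hd p hmeas hsuper hindep γ hγ β hβ q hq
end
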